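/- Fix a real α > 1/2 and a real c with 0 < c ≤ 2^α − 1. The function g(φ) = (1 − φ^{−α})² + c·φ^{−2α} attains its minimum over [1, ∞) uniquely at φ* = (1 + c)^{1/α}, and 1 < φ* ≤ 2; moreover g is strictly decreasing on [1, φ*] and strictly increasing on [φ*, ∞). -/

import Mathlib

/-!
Substituting `u = φ ^ (-α)`, which is strictly decreasing in `φ`, turns `g` into the quadratic
`(1 - u) ^ 2 + c * u ^ 2`, minimal at `u = (1 + c)⁻¹`, i.e. at `φ = (1 + c) ^ (1 / α)`. The
quadratic increases to the right of its vertex and decreases to the left, so `g` decreases up to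
`φ*` and increases after it; this also makes `φ*` the unique minimiser. Finally `c ≤ 2 ^ α - 1`
is exactly `φ* ≤ 2`.
-/

open Set

section Unimodal

variable {α β : Type*} [LinearOrder α] [Preorder β] {f : α → β} {a m x : α}

lemma le_of_strictAntiOn_Icc_of_strictMonoOn_Ici (h₁ : StrictAntiOn f (Icc a m))
    (h₂ : StrictMonoOn f (Ici m)) (hx : a ≤ x) : f m ≤ f x := by
  rcases le_total x m with hxm | hmx
  · exact h₁.antitoneOn ⟨hx, hxm⟩ ⟨hx.trans hxm, le_rfl⟩ hxm
  · exact h₂.monotoneOn self_mem_Ici hmx hmx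

lemma eq_of_strictAntiOn_Icc_of_strictMonoOn_Ici (h₁ : StrictAntiOn f (Icc a m))
    (h₂ : StrictMonoOn f (Ici m)) (hx : a ≤ x) (h : f x = f m) : x = m := by
  rcases lt_trichotomy x m with hxm | rfl | hmx
  · exact absurd h (h₁ ⟨hx, hxm.le⟩ ⟨hx.trans hxm.le, le_rfl⟩ hxm).ne'
  · rfl
  · exact absurd h (h₂ self_mem_Ici hmx.le hmx).ne'

end Unimodal

section Quadratic

variable {c : ℝ}

lemma strictMonoOn_quadratic_Ici (hc : 0 < 1 + c) :
    StrictMonoOn (fun u : ℝ => (1 - u) ^ 2 + c * u ^ 2) (Ici (1 + c)⁻¹) := by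
  intro x hx y hy hxy
  have hx' : 1 ≤ (1 + c) * x := by
    simpa [mul_inv_cancel₀ hc.ne'] using mul_le_mul_of_nonneg_left hx hc.le
  have hy' : 1 < (1 + c) * y := hx'.trans_lt (mul_lt_mul_of_pos_left hxy hc)
  nlinarith

lemma strictAntiOn_quadratic_Iic (hc : 0 < 1 + c) :
    StrictAntiOn (fun u : ℝ => (1 - u) ^ 2 + c * u ^ 2) (Iic (1 + c)⁻¹) := by
  intro x hx y hy hxy
  have hy' : (1 + c) * y ≤ 1 := by
    simpa [mul_inv_cancel₀ hc.ne'] using mul_le_mul_of_nonneg_left hy hc.le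
  have hx' : (1 + c) * x < 1 := (mul_lt_mul_of_pos_left hxy hc).trans_le hy'
  nlinarith

end Quadratic

lemma Real.rpow_neg_two_mul {x : ℝ} (hx : 0 ≤ x) (α : ℝ) :
    x ^ (-(2 * α)) = (x ^ (-α)) ^ 2 := by
  rw [← Real.rpow_natCast, ← Real.rpow_mul hx]
  ring_nf

lemma Real.rpow_one_div_rpow_neg {x α : ℝ} (hx : 0 ≤ x) (hα : α ≠ 0) :
    (x ^ (1 / α)) ^ (-α) = x⁻¹ := by
  rw [Real.rpow_neg (Real.rpow_nonneg hx _), one_div, Real.rpow_inv_rpow hx hα]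

theorem stmt16 (α c : ℝ) (hα : 1/2 < α) (hc0 : 0 < c) (hc1 : c ≤ 2 ^ α - 1) :
    let g : ℝ → ℝ := fun φ => (1 - φ ^ (-α)) ^ 2 + c * φ ^ (-(2 * α))
    let φstar : ℝ := (1 + c) ^ (1/α)
    1 < φstar ∧ φstar ≤ 2 ∧
    (∀ φ ∈ Set.Ici (1 : ℝ), g φstar ≤ g φ) ∧
    (∀ φ ∈ Set.Ici (1 : ℝ), g φ = g φstar → φ = φstar) ∧
    StrictAntiOn g (Set.Icc 1 φstar) ∧
    StrictMonoOn g (Set.Ici φstar) := by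
  intro g φstar
  have hα0 : 0 < α := by linarith
  have hc : 0 < 1 + c := by linarith
  have hφstar : 1 < φstar := Real.one_lt_rpow (by linarith) (by positivity)
  have hφstar_le : φstar ≤ 2 := by
    calc φstar ≤ (2 ^ α) ^ (1 / α) := Real.rpow_le_rpow hc.le (by linarith) (by positivity)
      _ = 2 := by rw [one_div, Real.rpow_rpow_inv zero_le_two hα0.ne']
  have hvertex : φstar ^ (-α) = (1 + c)⁻¹ := Real.rpow_one_div_rpow_neg hc.le hα0.ne'
  have hu := Real.strictAntiOn_rpow_Ioi_of_exponent_neg (neg_neg_of_pos hα0)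
  have hg : EqOn ((fun u : ℝ => (1 - u) ^ 2 + c * u ^ 2) ∘ fun φ => φ ^ (-α)) g (Ioi 0) :=
    fun φ hφ => by simp [g, Real.rpow_neg_two_mul hφ.le]
  have hIcc : Icc 1 φstar ⊆ Ioi 0 := fun φ hφ => zero_lt_one.trans_le hφ.1
  have hIci : Ici φstar ⊆ Ioi 0 := fun φ hφ => (zero_lt_one.trans hφstar).trans_le hφ
  have hanti : StrictAntiOn g (Icc 1 φstar) := by
    refine ((strictMonoOn_quadratic_Ici hc).comp_strictAntiOn (hu.mono hIcc)
      fun φ hφ => ?_).congr (hg.mono hIcc)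
    rw [mem_Ici, ← hvertex]
    exact Real.rpow_le_rpow_of_nonpos (hIcc hφ) hφ.2 (by linarith)
  have hmono : StrictMonoOn g (Ici φstar) := by
    refine ((strictAntiOn_quadratic_Iic hc).comp (hu.mono hIci)
      fun φ hφ => ?_).congr (hg.mono hIci)
    rw [mem_Iic, ← hvertex]
    exact Real.rpow_le_rpow_of_nonpos (hIci self_mem_Ici) hφ (by linarith)
  exact ⟨hφstar, hφstar_le,
    fun _ hφ => le_of_strictAntiOn_Icc_of_strictMonoOn_Ici hanti hmono hφ,
    fun _ hφ => eq_of_strictAntiOn_Icc_of_strictMonoOn_Ici hanti hmono hφ, hanti, hmono⟩
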